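/- arXiv:1311.4221 — 4 statements merged into one kernel-verified Lean document; each statement's English description precedes it below -/
import Mathlib

section
/- The map Φ₊ : (0,∞) × S² → ℝ³ \ {0} given in spherical-type coordinates by Φ₊(ρ, φ, θ) = (ρ sin θ cos φ, ρ sin θ sin φ, ρ³ cos θ) is a bijection. -/
/-!
Write `Φ₊(ρ, u) = D_ρ u` with the weighted dilations `D_ρ x = (ρ x₀, ρ x₁, ρ³ x₂)`, which satisfy
`D_ρ D_σ = D_{ρσ}`. Then `Φ₊(ρ, u) = v` forces `u = D_{1/ρ} v`, and `u` lies on the sphere iff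
`s = 1/ρ` solves `(v₀² + v₁²) s² + v₂² s⁶ = 1`. For `v ≠ 0` the left side increases strictly
from `0` to `∞` on `[0, ∞)`, so this equation has exactly one positive solution.
-/

open Set Filter

section MulPowAddMulPow

variable {a b : ℝ} {m n : ℕ}

lemma strictMonoOn_mul_pow_add_mul_pow (ha : 0 ≤ a) (hb : 0 ≤ b) (hab : 0 < a + b)
    (hm : m ≠ 0) (hn : n ≠ 0) : StrictMonoOn (fun s : ℝ => a * s ^ m + b * s ^ n) (Ici 0) := by
  intro s hs t _ hst
  have hsm : s ^ m < t ^ m := pow_lt_pow_left₀ hst hs hm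
  have hsn : s ^ n < t ^ n := pow_lt_pow_left₀ hst hs hn
  rcases ha.lt_or_eq with ha | rfl
  · exact add_lt_add_of_lt_of_le (mul_lt_mul_of_pos_left hsm ha)
      (mul_le_mul_of_nonneg_left hsn.le hb)
  · simpa using mul_lt_mul_of_pos_left hsn (by linarith)

lemma tendsto_mul_pow_add_mul_pow_atTop (ha : 0 ≤ a) (hb : 0 ≤ b) (hab : 0 < a + b)
    (hm : m ≠ 0) (hn : n ≠ 0) : Tendsto (fun s : ℝ => a * s ^ m + b * s ^ n) atTop atTop := by
  refine tendsto_atTop_mono' _ ?_ (tendsto_id.const_mul_atTop hab)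
  filter_upwards [eventually_ge_atTop 1] with s hs
  have hsm : s ≤ s ^ m := le_self_pow₀ hs hm
  have hsn : s ≤ s ^ n := le_self_pow₀ hs hn
  simp only [id, add_mul]
  gcongr

lemma exists_pos_mul_pow_add_mul_pow_eq_one (ha : 0 ≤ a) (hb : 0 ≤ b) (hab : 0 < a + b)
    (hm : m ≠ 0) (hn : n ≠ 0) : ∃ s > 0, a * s ^ m + b * s ^ n = 1 := by
  have hcont : ContinuousOn (fun s : ℝ => a * s ^ m + b * s ^ n) (Ici 0) := by fun_prop
  obtain ⟨s, hs, hs1⟩ := intermediate_value_Ici hcont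
    (tendsto_mul_pow_add_mul_pow_atTop ha hb hab hm hn) (by simp [hm, hn] : (1 : ℝ) ∈ _)
  refine ⟨s, (mem_Ici.1 hs).lt_of_ne ?_, hs1⟩
  rintro rfl
  simp [hm, hn] at hs1

end MulPowAddMulPow

section WeightedDilation

def weightedDilation (ρ : ℝ) (x : Fin 3 → ℝ) : Fin 3 → ℝ := ![ρ * x 0, ρ * x 1, ρ ^ 3 * x 2]

lemma weightedDilation_weightedDilation (ρ σ : ℝ) (x : Fin 3 → ℝ) :
    weightedDilation ρ (weightedDilation σ x) = weightedDilation (ρ * σ) x := by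
  ext i; fin_cases i <;> simp [weightedDilation] <;> ring

lemma weightedDilation_inv_weightedDilation {ρ : ℝ} (hρ : ρ ≠ 0) (x : Fin 3 → ℝ) :
    weightedDilation ρ⁻¹ (weightedDilation ρ x) = x := by
  rw [weightedDilation_weightedDilation, inv_mul_cancel₀ hρ]
  ext i; fin_cases i <;> simp [weightedDilation]

lemma weightedDilation_ne_zero {ρ : ℝ} (hρ : ρ ≠ 0) {x : Fin 3 → ℝ} (hx : x ≠ 0) :
    weightedDilation ρ x ≠ 0 := by
  contrapose! hx
  rw [← weightedDilation_inv_weightedDilation hρ x, hx]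
  ext i; fin_cases i <;> simp [weightedDilation]

lemma sum_sq_weightedDilation (s : ℝ) (x : Fin 3 → ℝ) :
    weightedDilation s x 0 ^ 2 + weightedDilation s x 1 ^ 2 + weightedDilation s x 2 ^ 2 =
      (x 0 ^ 2 + x 1 ^ 2) * s ^ 2 + x 2 ^ 2 * s ^ 6 := by
  simp [weightedDilation]; ring

lemma sum_sq_pos_of_ne_zero {x : Fin 3 → ℝ} (hx : x ≠ 0) : 0 < x 0 ^ 2 + x 1 ^ 2 + x 2 ^ 2 := by
  contrapose! hx
  ext i; fin_cases i <;> simp <;> nlinarith [sq_nonneg (x 0), sq_nonneg (x 1), sq_nonneg (x 2)]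

variable {ρ σ : ℝ} {u w v : Fin 3 → ℝ}

lemma weightedDilation_ne_zero_of_sum_sq_eq_one (hρ : 0 < ρ)
    (hu : u 0 ^ 2 + u 1 ^ 2 + u 2 ^ 2 = 1) : weightedDilation ρ u ≠ 0 := by
  refine weightedDilation_ne_zero hρ.ne' ?_
  rintro rfl
  simp at hu

lemma eq_and_eq_of_weightedDilation_eq (hρ : 0 < ρ) (hu : u 0 ^ 2 + u 1 ^ 2 + u 2 ^ 2 = 1)
    (hσ : 0 < σ) (hw : w 0 ^ 2 + w 1 ^ 2 + w 2 ^ 2 = 1)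
    (h : weightedDilation ρ u = weightedDilation σ w) : ρ = σ ∧ u = w := by
  have hv := sum_sq_pos_of_ne_zero (weightedDilation_ne_zero_of_sum_sq_eq_one hσ hw)
  set v := weightedDilation σ w
  have hu' : u = weightedDilation ρ⁻¹ v := by
    rw [← h, weightedDilation_inv_weightedDilation hρ.ne']
  have hw' : w = weightedDilation σ⁻¹ v := (weightedDilation_inv_weightedDilation hσ.ne' w).symm
  rw [hu', sum_sq_weightedDilation] at hu
  rw [hw', sum_sq_weightedDilation] at hw
  have hρσ : ρ⁻¹ = σ⁻¹ := (strictMonoOn_mul_pow_add_mul_pow (by positivity) (by positivity) hv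
    two_ne_zero (by norm_num)).injOn (inv_pos.2 hρ).le (inv_pos.2 hσ).le (hu.trans hw.symm)
  rw [inv_inj] at hρσ
  subst hρσ
  exact ⟨rfl, hu'.trans hw'.symm⟩

lemma exists_weightedDilation_eq (hv : v ≠ 0) :
    ∃ ρ > 0, ∃ u : Fin 3 → ℝ, u 0 ^ 2 + u 1 ^ 2 + u 2 ^ 2 = 1 ∧ weightedDilation ρ u = v := by
  obtain ⟨s, hs, hs1⟩ := exists_pos_mul_pow_add_mul_pow_eq_one (by positivity) (by positivity)
    (sum_sq_pos_of_ne_zero hv) two_ne_zero (by norm_num : 6 ≠ 0)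
  refine ⟨s⁻¹, inv_pos.2 hs, weightedDilation s v, ?_,
    weightedDilation_inv_weightedDilation hs.ne' v⟩
  rw [sum_sq_weightedDilation, hs1]

end WeightedDilation

/-- The map `Φ₊ : (0,∞) × S² → ℝ³ \ {0}`, `Φ₊(ρ, u) = (ρ u₁, ρ u₂, ρ³ u₃)`
(which in spherical coordinates `u = (sin θ cos φ, sin θ sin φ, cos θ)` is
`(ρ sin θ cos φ, ρ sin θ sin φ, ρ³ cos θ)`) is a bijection. -/
theorem stmt2 :
    Set.BijOn
      (fun p : ℝ × (Fin 3 → ℝ) => ![p.1 * p.2 0, p.1 * p.2 1, p.1 ^ 3 * p.2 2])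
      (Set.Ioi (0 : ℝ) ×ˢ {u : Fin 3 → ℝ | u 0 ^ 2 + u 1 ^ 2 + u 2 ^ 2 = 1})
      {v : Fin 3 → ℝ | v ≠ 0} := by
  refine ⟨?_, ?_, ?_⟩
  · rintro ⟨ρ, u⟩ ⟨hρ, hu⟩
    exact weightedDilation_ne_zero_of_sum_sq_eq_one hρ hu
  · rintro ⟨ρ, u⟩ ⟨hρ, hu⟩ ⟨σ, w⟩ ⟨hσ, hw⟩ h
    obtain ⟨rfl, rfl⟩ := eq_and_eq_of_weightedDilation_eq hρ hu hσ hw h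
    rfl
  · intro v hv
    obtain ⟨ρ, hρ, u, hu, rfl⟩ := exists_weightedDilation_eq hv
    exact ⟨(ρ, u), ⟨hρ, hu⟩, rfl⟩
end

section
/- On ℝ × S², away from θ ∈ {0, π}, the vectors v₁ = (fg)⁻¹(−3 cot θ ∂_φ + (1/2) sin θ ∂_ρ) and v₂ = 2ρ csc θ ∂_φ + ∂_θ satisfy λ₁(v₁) = λ₁(v₂) = 0 and dλ₁(v₁, v₂) = 1/f, where λ₁ = 3cos θ dρ − ρ sin θ dθ + (1/2)sin²θ dφ, g(θ) = 2cos²θ + 1, and f is any smooth positive function. -/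
open Real

theorem sin_sq_add_three_mul_cos_sq (θ : ℝ) : sin θ ^ 2 + 3 * cos θ ^ 2 = 2 * cos θ ^ 2 + 1 := by
  linear_combination sin_sq_add_cos_sq θ

theorem stmt9_general (f ρ θ : ℝ) (hθ : θ ∈ Set.Ioo 0 π) :
    let g := 2 * Real.cos θ ^ 2 + 1
    let v₁ : Fin 3 → ℝ :=
      ![(1 / 2) * Real.sin θ / (f * g), -3 * (Real.cos θ / Real.sin θ) / (f * g), 0]
    let v₂ : Fin 3 → ℝ := ![0, 2 * ρ / Real.sin θ, 1]
    let lam : (Fin 3 → ℝ) → ℝ := fun v =>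
      3 * Real.cos θ * v 0 - ρ * Real.sin θ * v 2 + (1 / 2) * Real.sin θ ^ 2 * v 1
    let dlam : (Fin 3 → ℝ) → (Fin 3 → ℝ) → ℝ := fun u v =>
      (2 * Real.sin θ * u 0 - Real.cos θ * Real.sin θ * u 1) * v 2
        - (2 * Real.sin θ * v 0 - Real.cos θ * Real.sin θ * v 1) * u 2
    lam v₁ = 0 ∧ lam v₂ = 0 ∧ dlam v₁ v₂ = 1 / f := by
  intro g v₁ v₂ lam dlam
  have hsin : sin θ ≠ 0 := (sin_pos_of_pos_of_lt_pi hθ.1 hθ.2).ne'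
  have hg : g ≠ 0 := by positivity
  refine ⟨?_, ?_, ?_⟩
  · simp only [lam, v₁, Matrix.cons_val]
    field_simp
    ring
  · simp only [lam, v₂, Matrix.cons_val]
    field_simp
    ring
  · calc dlam v₁ v₂ = (sin θ ^ 2 + 3 * cos θ ^ 2) / (f * g) := by
          simp only [dlam, v₁, v₂, Matrix.cons_val]
          field_simp
          ring
      _ = 1 / f := by
          rw [sin_sq_add_three_mul_cos_sq, div_mul_cancel_right₀ hg, one_div]

/-- Away from `θ ∈ {0, π}` the vectors `v₁ = (fg)⁻¹(-3 cot θ ∂_φ + (1/2) sin θ ∂_ρ)` and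
`v₂ = 2ρ csc θ ∂_φ + ∂_θ` satisfy `λ₁(v₁) = λ₁(v₂) = 0` and `dλ₁(v₁, v₂) = 1/f`, where
`λ₁ = 3 cos θ dρ - ρ sin θ dθ + (1/2) sin² θ dφ`, `g(θ) = 2 cos² θ + 1`,
`dλ₁ = (2 sin θ dρ - cos θ sin θ dφ) ∧ dθ`, and `f > 0`.
Components are ordered `(ρ, φ, θ)`. -/
theorem stmt9 (f ρ θ : ℝ) (hf : 0 < f) (hθ : θ ∈ Set.Ioo 0 π) :
    let g := 2 * Real.cos θ ^ 2 + 1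
    let v₁ : Fin 3 → ℝ :=
      ![(1 / 2) * Real.sin θ / (f * g), -3 * (Real.cos θ / Real.sin θ) / (f * g), 0]
    let v₂ : Fin 3 → ℝ := ![0, 2 * ρ / Real.sin θ, 1]
    let lam : (Fin 3 → ℝ) → ℝ := fun v =>
      3 * Real.cos θ * v 0 - ρ * Real.sin θ * v 2 + (1 / 2) * Real.sin θ ^ 2 * v 1
    let dlam : (Fin 3 → ℝ) → (Fin 3 → ℝ) → ℝ := fun u v =>
      (2 * Real.sin θ * u 0 - Real.cos θ * Real.sin θ * u 1) * v 2
        - (2 * Real.sin θ * v 0 - Real.cos θ * Real.sin θ * v 1) * u 2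
    lam v₁ = 0 ∧ lam v₂ = 0 ∧ dlam v₁ v₂ = 1 / f :=
  stmt9_general f ρ θ hθ
end

section
/- Let μ : Σ(1) → ℤ be any map on the space of continuous paths Ψ : [0,1] → Sp(1) with Ψ(0) = I and det(Ψ(1) − I) ≠ 0, satisfying (a) invariance under homotopies within Σ(1), and (b) μ(Ψ⁻¹) = −μ(Ψ) where Ψ⁻¹(t) = Ψ(t)⁻¹. Then for any k ≠ 0, the path Ψ_{I,k}(t) = diag(e^{kt}, e^{−kt}) satisfies μ(Ψ_{I,k}) = 0. -/
/-!
Conjugation by the rotations `R(sπ/2)`, `s ∈ [0,1]`, preserves the determinant, the value `I`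
at `t = 0` and the nondegeneracy `det (Ψ 1 - I) ≠ 0`, so it is a homotopy within `Σ(1)`.
At `s = 1` it swaps the diagonal entries of `diag(e^{kt}, e^{-kt})`, i.e. it ends at the
pointwise inverse path. Hence `μ(Ψ) = μ(Ψ⁻¹) = -μ(Ψ)`, and `μ(Ψ) = 0`.
-/

open Matrix Real

/-- The paper's `Σ(1)` for `n = Fin 2`, where `det = 1` is exactly the condition defining
`Sp(1)`. -/
def nondegPaths (n : Type*) [Fintype n] [DecidableEq n] : Set (ℝ → Matrix n n ℝ) :=
  {Ψ | ContinuousOn Ψ (Set.Icc 0 1) ∧ (∀ t ∈ Set.Icc (0 : ℝ) 1, (Ψ t).det = 1) ∧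
    Ψ 0 = 1 ∧ (Ψ 1 - 1).det ≠ 0}

theorem conj_mem_nondegPaths {n : Type*} [Fintype n] [DecidableEq n]
    {P Q : Matrix n n ℝ} (hPQ : P * Q = 1) {Ψ : ℝ → Matrix n n ℝ}
    (hΨ : Ψ ∈ nondegPaths n) :
    (fun t => P * Ψ t * Q) ∈ nondegPaths n := by
  obtain ⟨hcont, hdet, h0, h1⟩ := hΨ
  have hdetPQ : P.det * Q.det = 1 := by rw [← det_mul, hPQ, det_one]
  have det_conj (A : Matrix n n ℝ) : (P * A * Q).det = A.det := by
    rw [det_mul, det_mul, mul_right_comm, hdetPQ, one_mul]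
  refine ⟨(continuousOn_const.mul hcont).mul continuousOn_const,
    fun t ht => by rw [det_conj, hdet t ht], by simp [h0, hPQ], ?_⟩
  have hsub : P * Ψ 1 * Q - 1 = P * (Ψ 1 - 1) * Q := by
    rw [Matrix.mul_sub, Matrix.sub_mul, Matrix.mul_one, hPQ]
  rwa [hsub, det_conj]

noncomputable def rotationMatrix (θ : ℝ) : Matrix (Fin 2) (Fin 2) ℝ :=
  !![cos θ, -sin θ; sin θ, cos θ]

theorem continuous_rotationMatrix : Continuous rotationMatrix := by
  refine continuous_matrix fun i j => ?_
  fin_cases i <;> fin_cases j <;> simp [rotationMatrix] <;> fun_prop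

theorem rotationMatrix_zero : rotationMatrix 0 = 1 := by
  simp [rotationMatrix, one_fin_two]

theorem rotationMatrix_add (a b : ℝ) :
    rotationMatrix (a + b) = rotationMatrix a * rotationMatrix b := by
  rw [rotationMatrix, rotationMatrix, rotationMatrix, cos_add, sin_add, mul_fin_two]
  ext i j
  fin_cases i <;> fin_cases j <;> simp <;> ring

theorem rotationMatrix_mul_neg (θ : ℝ) : rotationMatrix θ * rotationMatrix (-θ) = 1 := by
  rw [← rotationMatrix_add, add_neg_cancel, rotationMatrix_zero]

theorem rotationMatrix_pi_div_two_conj_diagonal (a b : ℝ) :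
    rotationMatrix (π / 2) * diagonal ![a, b] * rotationMatrix (-(π / 2)) =
      diagonal ![b, a] := by
  ext i j
  fin_cases i <;> fin_cases j <;> simp [rotationMatrix, diagonal, mul_apply, vecHead, vecTail]

noncomputable def hyperbolicPath (k : ℝ) (t : ℝ) : Matrix (Fin 2) (Fin 2) ℝ :=
  diagonal ![exp (k * t), exp (-(k * t))]

theorem continuous_hyperbolicPath (k : ℝ) : Continuous (hyperbolicPath k) := by
  refine continuous_matrix fun i j => ?_
  fin_cases i <;> fin_cases j <;> simp [hyperbolicPath, diagonal] <;> fun_prop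

theorem hyperbolicPath_inv (k t : ℝ) :
    (hyperbolicPath k t)⁻¹ = diagonal ![exp (-(k * t)), exp (k * t)] := by
  refine inv_eq_left_inv ?_
  rw [hyperbolicPath, diagonal_mul_diagonal, ← diagonal_one]
  congr 1
  ext i
  fin_cases i <;> simp [← exp_add]

theorem hyperbolicPath_mem_nondegPaths {k : ℝ} (hk : k ≠ 0) :
    hyperbolicPath k ∈ nondegPaths (Fin 2) := by
  refine ⟨(continuous_hyperbolicPath k).continuousOn, fun t _ => ?_, ?_, ?_⟩
  · simp [hyperbolicPath, det_diagonal, Fin.prod_univ_two, ← exp_add]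
  · simp [hyperbolicPath, ← diagonal_one]
  · have hpos : exp k - 1 ≠ 0 := sub_ne_zero.mpr (by simpa using hk)
    have hneg : exp (-k) - 1 ≠ 0 := sub_ne_zero.mpr (by simpa using hk)
    simpa [hyperbolicPath, det_fin_two, diagonal, one_apply] using mul_ne_zero hpos hneg

/-- Let `μ` be any integer-valued map on the space `Σ(1)` of continuous paths
`Ψ : [0,1] → Sp(1)` with `Ψ 0 = I` and `det (Ψ 1 - I) ≠ 0`, which is invariant under
homotopies within `Σ(1)` and satisfies `μ(Ψ⁻¹) = -μ(Ψ)` for the pointwise inverse path.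
Then for any `k ≠ 0` the path `Ψ_{I,k}(t) = diag(e^{kt}, e^{-kt})` has `μ = 0`. -/
theorem stmt11
    (μ : (ℝ → Matrix (Fin 2) (Fin 2) ℝ) → ℤ)
    (S : Set (ℝ → Matrix (Fin 2) (Fin 2) ℝ))
    (hS : S = {Ψ | ContinuousOn Ψ (Set.Icc 0 1) ∧
        (∀ t ∈ Set.Icc (0 : ℝ) 1, (Ψ t).det = 1) ∧ Ψ 0 = 1 ∧ (Ψ 1 - 1).det ≠ 0})
    (hHomotopy : ∀ H : ℝ → ℝ → Matrix (Fin 2) (Fin 2) ℝ,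
        ContinuousOn (fun q : ℝ × ℝ => H q.1 q.2) (Set.Icc 0 1 ×ˢ Set.Icc 0 1) →
        (∀ s ∈ Set.Icc (0 : ℝ) 1, H s ∈ S) → μ (H 0) = μ (H 1))
    (hInv : ∀ Ψ ∈ S, μ (fun t => (Ψ t)⁻¹) = - μ Ψ)
    (k : ℝ) (hk : k ≠ 0) :
    μ (fun t => Matrix.diagonal ![Real.exp (k * t), Real.exp (-(k * t))]) = 0 := by
  obtain rfl : S = nondegPaths (Fin 2) := hS
  change μ (hyperbolicPath k) = 0
  have hΨ := hyperbolicPath_mem_nondegPaths hk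
  let H (s t : ℝ) :=
    rotationMatrix (s * (π / 2)) * hyperbolicPath k t * rotationMatrix (-(s * (π / 2)))
  have hH_cont : Continuous fun q : ℝ × ℝ => H q.1 q.2 :=
    ((continuous_rotationMatrix.comp (by fun_prop)).matrix_mul
      ((continuous_hyperbolicPath k).comp continuous_snd)).matrix_mul
      (continuous_rotationMatrix.comp (by fun_prop))
  have hH_mem (s : ℝ) (_ : s ∈ Set.Icc (0 : ℝ) 1) : H s ∈ nondegPaths (Fin 2) :=
    conj_mem_nondegPaths (rotationMatrix_mul_neg _) hΨ
  have hH₀ : H 0 = hyperbolicPath k := by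
    funext t
    simp [H, rotationMatrix_zero]
  have hH₁ : H 1 = fun t => (hyperbolicPath k t)⁻¹ := by
    funext t
    simp only [H, one_mul, hyperbolicPath_inv]
    exact rotationMatrix_pi_div_two_conj_diagonal _ _
  have hμ := hHomotopy H hH_cont.continuousOn hH_mem
  rw [hH₀, hH₁, hInv _ hΨ] at hμ
  omega
end

section
/- Let f : ℝ → ℝ be smooth and positive with ρ f'(ρ) > 0 for ρ ≠ 0, and on ℝ × S² (coordinates ρ, φ, θ) consider the vector field X_f = [g(θ)f(ρ)²]⁻¹ [(−ρf' + 2f)∂_φ − (1/2)sin θ f' ∂_θ + f cos θ ∂_ρ], where g(θ) = 2cos²θ + 1. Define Z(ρ, θ) = ρ cos θ. Then dZ(X_f) = [g(θ)f(ρ)²]⁻¹ (f cos²θ + (1/2) f' ρ sin²θ) ≥ 0 everywhere, with equality if and only if ρ = 0 and θ = π/2. -/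
open Real
open scoped ContDiff

/-!
Up to the positive factor `(g f²)⁻¹`, `dZ(X_f)` is `f cos² θ + b sin² θ` with `b = ½ f'(ρ) ρ ≥ 0`.
Both terms are nonnegative, so the sum vanishes only if `cos θ = 0`; then `sin² θ = 1` forces
`b = 0`, i.e. `ρ = 0`, and on `[0, π]` the only zero of `cos` is `π / 2`.
-/

theorem Real.cos_eq_zero_iff_of_mem_Icc {θ : ℝ} (hθ : θ ∈ Set.Icc 0 π) :
    cos θ = 0 ↔ θ = π / 2 := by
  have hpi : π / 2 ∈ Set.Icc 0 π := ⟨by positivity, by linarith [pi_pos]⟩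
  constructor
  · intro h
    exact injOn_cos hθ hpi (by rw [h, cos_pi_div_two])
  · rintro rfl
    exact cos_pi_div_two

theorem Real.mul_cos_sq_add_mul_sin_sq_eq_zero_iff {a b θ : ℝ} (ha : 0 < a) (hb : 0 ≤ b) :
    a * cos θ ^ 2 + b * sin θ ^ 2 = 0 ↔ cos θ = 0 ∧ b = 0 := by
  rw [add_eq_zero_iff_of_nonneg (by positivity) (by positivity), mul_eq_zero_iff_left ha.ne',
    pow_eq_zero_iff two_ne_zero]
  refine and_congr_right fun hcos => ?_
  have hsin : sin θ ^ 2 = 1 := by rw [sin_sq, hcos]; ring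
  rw [hsin, mul_one]

theorem stmt18_general (f : ℝ → ℝ) (hfpos : ∀ ρ, 0 < f ρ)
    (hmono : ∀ ρ : ℝ, ρ ≠ 0 → 0 < ρ * deriv f ρ)
    (ρ θ : ℝ) (hθ : θ ∈ Set.Icc 0 π) :
    let g := 2 * Real.cos θ ^ 2 + 1
    let Xρ := f ρ * Real.cos θ / (g * f ρ ^ 2)
    let Xθ := -(1 / 2) * Real.sin θ * deriv f ρ / (g * f ρ ^ 2)
    let D := (g * f ρ ^ 2)⁻¹ *
      (f ρ * Real.cos θ ^ 2 + (1 / 2) * deriv f ρ * ρ * Real.sin θ ^ 2)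
    (Real.cos θ * Xρ - ρ * Real.sin θ * Xθ = D) ∧ 0 ≤ D ∧
      (D = 0 ↔ ρ = 0 ∧ θ = π / 2) := by
  intro g Xρ Xθ D
  have hfρ := hfpos ρ
  have hscale : 0 < (g * f ρ ^ 2)⁻¹ := by positivity
  obtain ⟨hρf'_nonneg, hρf'_eq_zero⟩ : 0 ≤ ρ * deriv f ρ ∧ (ρ * deriv f ρ = 0 ↔ ρ = 0) := by
    rcases eq_or_ne ρ 0 with rfl | hρ
    · simp
    · exact ⟨(hmono ρ hρ).le, iff_of_false (hmono ρ hρ).ne' hρ⟩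
  have hb : (1 / 2) * deriv f ρ * ρ = (1 / 2) * (ρ * deriv f ρ) := by ring
  have hb_nonneg : 0 ≤ (1 / 2) * deriv f ρ * ρ := by rw [hb]; positivity
  refine ⟨by simp only [Xρ, Xθ, D, div_eq_mul_inv]; ring, by positivity, ?_⟩
  rw [mul_eq_zero_iff_left hscale.ne', mul_cos_sq_add_mul_sin_sq_eq_zero_iff hfρ hb_nonneg,
    cos_eq_zero_iff_of_mem_Icc hθ, hb, mul_eq_zero_iff_left (by norm_num), hρf'_eq_zero, and_comm]

/-- Let `f : ℝ → ℝ` be smooth and positive with `ρ f'(ρ) > 0` for `ρ ≠ 0`, and consider on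
`ℝ × S²` the Reeb field
`X_f = (g(θ) f(ρ)²)⁻¹ [(-ρ f' + 2f) ∂_φ - (1/2) sin θ f' ∂_θ + f cos θ ∂_ρ]`,
`g(θ) = 2 cos² θ + 1`, together with `Z(ρ,θ) = ρ cos θ` (so `dZ = cos θ dρ - ρ sin θ dθ`).
Then `dZ(X_f) = (g f²)⁻¹ (f cos² θ + (1/2) f' ρ sin² θ) ≥ 0`, with equality iff `ρ = 0` and
`θ = π/2`. -/
theorem stmt18 (f : ℝ → ℝ) (hf : ContDiff ℝ ∞ f) (hfpos : ∀ ρ, 0 < f ρ)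
    (hmono : ∀ ρ : ℝ, ρ ≠ 0 → 0 < ρ * deriv f ρ)
    (ρ θ : ℝ) (hθ : θ ∈ Set.Icc 0 π) :
    let g := 2 * Real.cos θ ^ 2 + 1
    let Xρ := f ρ * Real.cos θ / (g * f ρ ^ 2)
    let Xθ := -(1 / 2) * Real.sin θ * deriv f ρ / (g * f ρ ^ 2)
    let D := (g * f ρ ^ 2)⁻¹ *
      (f ρ * Real.cos θ ^ 2 + (1 / 2) * deriv f ρ * ρ * Real.sin θ ^ 2)
    (Real.cos θ * Xρ - ρ * Real.sin θ * Xθ = D) ∧ 0 ≤ D ∧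
      (D = 0 ↔ ρ = 0 ∧ θ = π / 2) :=
  stmt18_general f hfpos hmono ρ θ hθ
end
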